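/- arXiv:1607.02346 — 4 statements merged into one kernel-verified Lean document; each statement's English description precedes it below -/
import Mathlib

section
/- An H-split is 2-good: if G is a graph with minimum degree at least 3 and G' is obtained from G by an H-split on two distinct edges, then every 2-cut (separating pair of vertices) of G' that consists of vertices of G is also a 2-cut of G; in particular the number of separating pairs does not increase for pairs of original vertices. -/
open Sum

/-- `{a, b}` is a separating pair (2-cut) of `G`: removing the two vertices
disconnects the graph. -/
def SimpleGraph.IsSepPair {V : Type*} (G : SimpleGraph V) (a b : V) : Prop :=
  a ≠ b ∧ ¬ (((⊤ : G.Subgraph).deleteVerts {a, b}).coe.Connected)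


private theorem hsplit_aux {V : Type*} [Fintype V] [DecidableEq V]
    (G : SimpleGraph V) [DecidableRel G.Adj] (hconn : G.Connected)
    (hmin : ∀ a : V, 3 ≤ G.degree a)
    (u v w z : V) (huv : G.Adj u v) (hwz : G.Adj w z)
    (hne : s(u, v) ≠ s(w, z))
    (G' : SimpleGraph (V ⊕ Fin 2))
    (hGG : ∀ s t : V, G'.Adj (inl s) (inl t) ↔
      G.Adj s t ∧ s(s, t) ≠ s(u, v) ∧ s(s, t) ≠ s(w, z))
    (hv' : ∀ s : V, G'.Adj (inl s) (inr 0) ↔ s = u ∨ s = v)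
    (hv'' : ∀ s : V, G'.Adj (inl s) (inr 1) ↔ s = w ∨ s = z)
    (hvv : G'.Adj (inr 0) (inr 1)) (a b : V)
    (hab : a ≠ b)
    (hGconn : (((⊤ : G.Subgraph).deleteVerts {a, b}).coe.Connected)) :
    (((⊤ : G'.Subgraph).deleteVerts {(inl a : V ⊕ Fin 2), inl b}).coe.Connected) := by
  set H := ((⊤ : G'.Subgraph).deleteVerts {(inl a : V ⊕ Fin 2), inl b}).coe with hH
  -- membership helpers
  have memI : ∀ x : V, x ≠ a → x ≠ b →
      (inl x : V ⊕ Fin 2) ∈ ((⊤ : G'.Subgraph).deleteVerts {(inl a : V ⊕ Fin 2), inl b}).verts := by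
    intro x h1 h2; simp [h1, h2]
  have memR : ∀ i : Fin 2,
      (inr i : V ⊕ Fin 2) ∈ ((⊤ : G'.Subgraph).deleteVerts {(inl a : V ⊕ Fin 2), inl b}).verts := by
    intro i; simp
  have hAdj : ∀ (p q : ((⊤ : G'.Subgraph).deleteVerts {(inl a : V ⊕ Fin 2), inl b}).verts),
      G'.Adj p.1 q.1 → H.Adj p q := by
    rintro ⟨p, hp⟩ ⟨q, hq⟩ h
    simp only [Set.mem_diff, SimpleGraph.Subgraph.deleteVerts_verts,
      SimpleGraph.Subgraph.verts_top] at hp hq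
    simp [hH, SimpleGraph.Subgraph.deleteVerts_adj, hp.2, hq.2, h]
  -- lifting edges of G to reachability in H
  have key : ∀ (x y : V) (hx1 : x ≠ a) (hx2 : x ≠ b) (hy1 : y ≠ a) (hy2 : y ≠ b),
      G.Adj x y → H.Reachable ⟨inl x, memI x hx1 hx2⟩ ⟨inl y, memI y hy1 hy2⟩ := by
    intro x y hx1 hx2 hy1 hy2 hxy
    by_cases h1 : s(x, y) = s(u, v)
    · rw [Sym2.eq_iff] at h1
      have hx0 : G'.Adj (inl x) (inr 0) := (hv' x).2 (by tauto)
      have hy0 : G'.Adj (inl y) (inr 0) := (hv' y).2 (by tauto)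
      exact (SimpleGraph.Adj.reachable (hAdj _ ⟨inr 0, memR 0⟩ hx0)).trans
        (SimpleGraph.Adj.reachable (hAdj ⟨inr 0, memR 0⟩ _ hy0.symm))
    by_cases h2 : s(x, y) = s(w, z)
    · rw [Sym2.eq_iff] at h2
      have hx0 : G'.Adj (inl x) (inr 1) := (hv'' x).2 (by tauto)
      have hy0 : G'.Adj (inl y) (inr 1) := (hv'' y).2 (by tauto)
      exact (SimpleGraph.Adj.reachable (hAdj _ ⟨inr 1, memR 1⟩ hx0)).trans
        (SimpleGraph.Adj.reachable (hAdj ⟨inr 1, memR 1⟩ _ hy0.symm))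
    exact SimpleGraph.Adj.reachable (hAdj _ _ ((hGG x y).2 ⟨hxy, h1, h2⟩))
  -- embedding of vertices
  have memV : ∀ p : ((⊤ : G.Subgraph).deleteVerts {a, b}).verts, p.1 ≠ a ∧ p.1 ≠ b := by
    rintro ⟨p, hp⟩
    simpa [Set.mem_diff] using hp
  let f : ((⊤ : G.Subgraph).deleteVerts {a, b}).verts →
      ((⊤ : G'.Subgraph).deleteVerts {(inl a : V ⊕ Fin 2), inl b}).verts :=
    fun p => ⟨inl p.1, memI p.1 (memV p).1 (memV p).2⟩
  have lift : ∀ p q : ((⊤ : G.Subgraph).deleteVerts {a, b}).verts,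
      ((⊤ : G.Subgraph).deleteVerts {a, b}).coe.Reachable p q →
      H.Reachable (f p) (f q) := by
    intro p q hr
    obtain ⟨wlk⟩ := hr
    induction wlk with
    | nil => exact SimpleGraph.Reachable.refl _
    | cons h wlk ih =>
      rename_i p' r' q'
      have hadj : G.Adj p'.1 r'.1 := SimpleGraph.Subgraph.coe_adj_sub _ _ _ h
      exact (key p'.1 r'.1 (memV p').1 (memV p').2 (memV r').1 (memV r').2 hadj).trans ih
  -- choose a base original vertex adjacent to a new vertex
  obtain ⟨c, hc1, hc2, hcadj⟩ : ∃ c : V, c ≠ a ∧ c ≠ b ∧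
      (G'.Adj (inl c) (inr 0) ∨ G'.Adj (inl c) (inr 1)) := by
    by_cases hu : u ≠ a ∧ u ≠ b
    · exact ⟨u, hu.1, hu.2, Or.inl ((hv' u).2 (Or.inl rfl))⟩
    by_cases hv0 : v ≠ a ∧ v ≠ b
    · exact ⟨v, hv0.1, hv0.2, Or.inl ((hv' v).2 (Or.inr rfl))⟩
    by_cases hw : w ≠ a ∧ w ≠ b
    · exact ⟨w, hw.1, hw.2, Or.inr ((hv'' w).2 (Or.inl rfl))⟩
    by_cases hz : z ≠ a ∧ z ≠ b
    · exact ⟨z, hz.1, hz.2, Or.inr ((hv'' z).2 (Or.inr rfl))⟩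
    exfalso
    push_neg at hu hv0 hw hz
    have pair : ∀ x y : V, x ≠ y → (x = a ∨ x = b) → (y = a ∨ y = b) →
        s(x, y) = s(a, b) := by
      rintro x y hxy (rfl | rfl) (rfl | rfl)
      · exact absurd rfl hxy
      · rfl
      · exact Sym2.eq_swap
      · exact absurd rfl hxy
    have hu' : u = a ∨ u = b := by
      by_cases h : u = a
      · exact Or.inl h
      · exact Or.inr (hu h)
    have hv0' : v = a ∨ v = b := by
      by_cases h : v = a
      · exact Or.inl h
      · exact Or.inr (hv0 h)
    have hw' : w = a ∨ w = b := by
      by_cases h : w = a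
      · exact Or.inl h
      · exact Or.inr (hw h)
    have hz' : z = a ∨ z = b := by
      by_cases h : z = a
      · exact Or.inl h
      · exact Or.inr (hz h)
    exact hne ((pair u v huv.ne hu' hv0').trans (pair w z hwz.ne hw' hz').symm)
  have hcmemG : (c : V) ∈ ((⊤ : G.Subgraph).deleteVerts {a, b}).verts := by
    simp [hc1, hc2]
  let base : ((⊤ : G'.Subgraph).deleteVerts {(inl a : V ⊕ Fin 2), inl b}).verts :=
    ⟨inl c, memI c hc1 hc2⟩
  have r01 : H.Adj ⟨inr 0, memR 0⟩ ⟨inr 1, memR 1⟩ := hAdj _ _ hvv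
  have reach0 : H.Reachable ⟨inr 0, memR 0⟩ base := by
    rcases hcadj with h | h
    · exact (hAdj base ⟨inr 0, memR 0⟩ h).symm.reachable
    · exact r01.reachable.trans (hAdj base ⟨inr 1, memR 1⟩ h).symm.reachable
  have reach1 : H.Reachable ⟨inr 1, memR 1⟩ base :=
    r01.symm.reachable.trans reach0
  have reach_base : ∀ p : ((⊤ : G'.Subgraph).deleteVerts
      {(inl a : V ⊕ Fin 2), inl b}).verts, H.Reachable p base := by
    rintro ⟨val, hval⟩
    match val with
    | inl x =>
      have hx : x ≠ a ∧ x ≠ b := by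
        simpa [Set.mem_diff] using hval
      have hxm : x ∈ ((⊤ : G.Subgraph).deleteVerts {a, b}).verts := by
        simp [hx.1, hx.2]
      exact lift ⟨x, hxm⟩ ⟨c, hcmemG⟩ (hGconn.preconnected _ _)
    | inr i =>
      fin_cases i
      · exact reach0
      · exact reach1
  haveI : Nonempty ((⊤ : G'.Subgraph).deleteVerts {(inl a : V ⊕ Fin 2), inl b}).verts :=
    ⟨base⟩
  exact SimpleGraph.Connected.mk fun p q => (reach_base p).trans (reach_base q).symm

/-- An H-split is 2-good: if `G` is connected with minimum degree at least 3 and `G'`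
is obtained from `G` by an H-split on two distinct edges `(u,v)` and `(w,z)`
(with new vertices `v' = inr 0`, `v'' = inr 1` and the extra edge `(v', v'')`),
then every 2-cut of `G'` consisting of original vertices is also a 2-cut of `G`. -/
theorem hsplit_two_good {V : Type*} [Fintype V] [DecidableEq V]
    (G : SimpleGraph V) [DecidableRel G.Adj] (hconn : G.Connected)
    (hmin : ∀ a : V, 3 ≤ G.degree a)
    (u v w z : V) (huv : G.Adj u v) (hwz : G.Adj w z)
    (hne : s(u, v) ≠ s(w, z))
    (G' : SimpleGraph (V ⊕ Fin 2))
    (hGG : ∀ s t : V, G'.Adj (inl s) (inl t) ↔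
      G.Adj s t ∧ s(s, t) ≠ s(u, v) ∧ s(s, t) ≠ s(w, z))
    (hv' : ∀ s : V, G'.Adj (inl s) (inr 0) ↔ s = u ∨ s = v)
    (hv'' : ∀ s : V, G'.Adj (inl s) (inr 1) ↔ s = w ∨ s = z)
    (hvv : G'.Adj (inr 0) (inr 1)) :
    ∀ a b : V, G'.IsSepPair (inl a) (inl b) → G.IsSepPair a b := by
  rintro a b ⟨hab, hnot⟩
  have hab' : a ≠ b := fun h => hab (by rw [h])
  refine ⟨hab', fun hG => hnot ?_⟩
  exact hsplit_aux G hconn hmin u v w z huv hwz hne G' hGG hv' hv'' hvv a b hab' hG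
end

section
/- Let G be a 2-connected cubic planar graph, let e = (u,v) and e' = (x,y) be two edges of G, and let G' be obtained from G by the following augmentation: remove e and e'; add new vertices u', v', a1, a2, a3, b1, b2, b3, x', x'', y', y''; and add edges so that the resulting gadget connects u, v, x, y as in the gadget of Lemma 3 (u–u', v–v', u'–v' absent, with u', v' each adjacent to a1 and b1 appropriately, a1–a2–a3 and b1–b2–b3 structure, x–x'–x''–y and x–y'–y''–y paths, with a2, a3 adjacent to x', x'' and b2, b3 adjacent to y', y'' as in the figure). Then α(G') = α(G) + 5. -/
open Sum

/-- A set of vertices is independent if its vertices are pairwise non-adjacent. -/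
def SimpleGraph.IsIndepVertexSet {V : Type*} (G : SimpleGraph V) (I : Set V) : Prop :=
  I.Pairwise fun a b => ¬ G.Adj a b

/-- The independence number `α G`. -/
noncomputable def SimpleGraph.indepNum' {V : Type*} (G : SimpleGraph V) : ℕ :=
  sSup {n | ∃ s : Finset V, G.IsIndepVertexSet ↑s ∧ s.card = n}

/-- `G` is 2-connected: at least 3 vertices, connected, and no cutvertex. -/
def SimpleGraph.TwoConnected {V : Type*} [Fintype V] (G : SimpleGraph V) : Prop :=
  3 ≤ Fintype.card V ∧ G.Connected ∧
    ∀ a : V, (((⊤ : G.Subgraph).deleteVerts {a}).coe.Connected)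

/-- The internal edges of the MIS gadget of Fig. 3(a), on the 12 new vertices
`0 = u', 1 = v', 2 = a₁, 3 = a₂, 4 = a₃, 5 = b₁, 6 = b₂, 7 = b₃,
8 = x', 9 = x'', 10 = y', 11 = y''`: the edge `u'v'`, edges `u'b₁`, `v'a₁`,
triangles `a₁a₂a₃` and `b₁b₂b₃`, edges `a₂y''`, `a₃x'`, `b₂y'`, `b₃x''`,
and edges `x'y''`, `x''y'`, `x''y''`. -/
def misGadgetAdj (i j : Fin 12) : Prop :=
  ((i, j) : Fin 12 × Fin 12) ∈
    ({(0,1), (0,5), (1,2), (2,3), (2,4), (3,4), (5,6), (5,7), (6,7),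
      (3,11), (4,8), (6,10), (7,9), (8,11), (9,10), (9,11)} : Set (Fin 12 × Fin 12))

/-!
Split an independent set of `G'` into its trace `A` on `V` and `B` on the gadget. The gadget is
covered by five cliques, so `|B| ≤ 5`, and by four as soon as a port pair `{u', v'}` or
`{x', y'}` is avoided by `B`; that happens whenever both ends of the corresponding deleted edge
lie in `A`, and removing one end of each such edge makes `A` independent in `G`. Conversely, an
independent set of `G` misses an end of `uv` and an end of `xy`, and for each of these four
patterns the gadget has a compatible independent set of size 5.
-/

open Finset

namespace SimpleGraph

variable {W : Type*} {H : SimpleGraph W}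

theorem indepNum'_eq_indepNum (H : SimpleGraph W) : H.indepNum' = H.indepNum := by
  simp only [indepNum', indepNum, isNIndepSet_iff, IsIndepVertexSet]

theorem isIndepSet_disjSum {α β : Type*} {K : SimpleGraph (α ⊕ β)} {s : Finset α}
    {t : Finset β} :
    K.IsIndepSet ↑(s.disjSum t) ↔ (K.comap inl).IsIndepSet ↑s ∧ (K.comap inr).IsIndepSet ↑t ∧
      ∀ a ∈ s, ∀ b ∈ t, ¬K.Adj (inl a) (inr b) := by
  refine ⟨fun h => ⟨?_, ?_, ?_⟩, fun ⟨hs, ht, hst⟩ => ?_⟩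
  · exact fun a ha b hb hab => h (by simpa using ha) (by simpa using hb) (by simpa using hab)
  · exact fun a ha b hb hab => h (by simpa using ha) (by simpa using hb) (by simpa using hab)
  · exact fun a ha b hb => h (by simpa using ha) (by simpa using hb) (by simp)
  · rintro (a | b) hp (a' | b') hq hne hadj <;>
      simp only [mem_coe, inl_mem_disjSum, inr_mem_disjSum] at hp hq
    · exact hs hp hq (by simpa using hne) hadj
    · exact hst a hp b' hq hadj
    · exact hst a' hq b hp hadj.symm
    · exact ht hp hq (by simpa using hne) hadj

theorem IsIndepSet.card_le_of_isClique_fibers {ι : Type*} {s : Finset W} {I : Finset ι}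
    {f : W → ι} (hs : H.IsIndepSet s) (hf : ∀ a b, f a = f b → a ≠ b → H.Adj a b)
    (hsI : ∀ a ∈ s, f a ∈ I) : #s ≤ #I :=
  card_le_card_of_injOn f hsI fun a ha b hb hab =>
    by_contra fun hne => hs ha hb hne (hf a b hab hne)

theorem card_le_indepNum_add_card_of_deleteEdges [Finite W] {E : Set (Sym2 W)} {A R : Finset W}
    (hA : (H.deleteEdges E).IsIndepSet A) (hR : ∀ a ∈ A, ∀ b ∈ A, s(a, b) ∈ E → a ∈ R ∨ b ∈ R) :
    #A ≤ H.indepNum + #R := by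
  classical
  have hAR : H.IsIndepSet ↑(A \ R) := by
    intro a ha b hb hne hadj
    simp only [coe_sdiff, Set.mem_sdiff, mem_coe] at ha hb
    have hE : s(a, b) ∈ E := by
      by_contra hE
      exact hA ha.1 hb.1 hne ((deleteEdges_adj).2 ⟨hadj, hE⟩)
    rcases hR a ha.1 b hb.1 hE with h | h
    exacts [ha.2 h, hb.2 h]
  calc #A ≤ #(A \ R) + #R := card_le_card_sdiff_add_card
    _ ≤ H.indepNum + #R := by gcongr; exact hAR.card_le_indepNum

end SimpleGraph

open SimpleGraph

instance : DecidableRel misGadgetAdj := fun i j => by unfold misGadgetAdj; infer_instance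

def misGadget : SimpleGraph (Fin 12) := SimpleGraph.fromRel misGadgetAdj

instance : DecidableRel misGadget.Adj := fun a b =>
  decidable_of_iff' _ (SimpleGraph.fromRel_adj misGadgetAdj a b)

namespace misGadget

/-- Its fibres are the cliques `{u', v'}, {a₁, a₂, a₃}, {b₁, b₂, b₃}, {x', y''}, {x'', y'}`. -/
def cliqueLabel : Fin 12 → ℕ := ![0, 0, 1, 1, 1, 2, 2, 2, 3, 4, 4, 3]

/-- Its fibres are the cliques `{u', v'}, {a₁, a₂, a₃}, {b₁, b₂, b₃}, {x'', y''}, {x'}, {y'}`. -/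
def cliqueLabel' : Fin 12 → ℕ := ![0, 0, 1, 1, 1, 2, 2, 2, 4, 3, 5, 3]

theorem exists_isNIndepSet_five_notMem {p q : Fin 12} (hp : p = 0 ∨ p = 1)
    (hq : q = 8 ∨ q = 10) : ∃ T, misGadget.IsNIndepSet 5 T ∧ p ∉ T ∧ q ∉ T := by
  rcases hp with rfl | rfl <;> rcases hq with rfl | rfl
  exacts [⟨{1, 4, 5, 10, 11}, by decide⟩, ⟨{1, 3, 5, 8, 9}, by decide⟩,
    ⟨{0, 2, 7, 10, 11}, by decide⟩, ⟨{0, 3, 6, 8, 9}, by decide⟩]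

variable {B : Finset (Fin 12)}

theorem card_indepSet_le_five (hB : misGadget.IsIndepSet B) : #B ≤ 5 :=
  hB.card_le_of_isClique_fibers (f := cliqueLabel) (I := range 5) (by decide)
    fun a _ => by fin_cases a <;> decide

theorem card_indepSet_le_four_of_notMem_uv (hB : misGadget.IsIndepSet B) (h0 : 0 ∉ B)
    (h1 : 1 ∉ B) : #B ≤ 4 :=
  hB.card_le_of_isClique_fibers (f := cliqueLabel) (I := {1, 2, 3, 4}) (by decide)
    fun a ha => by fin_cases a <;> simp_all [cliqueLabel]

theorem card_indepSet_le_four_of_notMem_xy (hB : misGadget.IsIndepSet B) (h8 : 8 ∉ B)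
    (h10 : 10 ∉ B) : #B ≤ 4 :=
  hB.card_le_of_isClique_fibers (f := cliqueLabel') (I := range 4) (by decide)
    fun a ha => by fin_cases a <;> simp_all [cliqueLabel']

theorem card_indepSet_le_three (hB : misGadget.IsIndepSet B) (h0 : 0 ∉ B) (h1 : 1 ∉ B)
    (h8 : 8 ∉ B) (h10 : 10 ∉ B) : #B ≤ 3 :=
  hB.card_le_of_isClique_fibers (f := cliqueLabel') (I := {1, 2, 3}) (by decide)
    fun a ha => by fin_cases a <;> simp_all [cliqueLabel']

end misGadget

theorem card_add_card_le_indepNum_add_five {V : Type*} [Finite V] (G : SimpleGraph V)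
    {u v x y : V} {A : Finset V} {B : Finset (Fin 12)}
    (hA : (G.deleteEdges {s(u, v), s(x, y)}).IsIndepSet A) (hB : misGadget.IsIndepSet B)
    (hAB : ∀ a ∈ A, ∀ i ∈ B,
      ¬((a = u ∧ i = 1) ∨ (a = v ∧ i = 0) ∨ (a = x ∧ i = 10) ∨ (a = y ∧ i = 8))) :
    #A + #B ≤ G.indepNum + 5 := by
  classical
  have hA_le := fun R => G.card_le_indepNum_add_card_of_deleteEdges (R := R) hA
  simp only [Set.mem_insert_iff, Set.mem_singleton_iff, Sym2.eq_iff] at hA_le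
  by_cases huv : u ∈ A ∧ v ∈ A <;> by_cases hxy : x ∈ A ∧ y ∈ A
  · have hA₂ := hA_le {v, y} (by grind)
    have hB₃ := misGadget.card_indepSet_le_three hB (by grind) (by grind) (by grind) (by grind)
    have hR₂ := card_le_two (a := v) (b := y)
    omega
  · have hA₁ := hA_le {v} (by grind)
    have hB₄ := misGadget.card_indepSet_le_four_of_notMem_uv hB (by grind) (by grind)
    rw [card_singleton] at hA₁
    omega
  · have hA₁ := hA_le {y} (by grind)
    have hB₄ := misGadget.card_indepSet_le_four_of_notMem_xy hB (by grind) (by grind)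
    rw [card_singleton] at hA₁
    omega
  · have hA₀ := hA_le ∅ (by grind)
    have hB₅ := misGadget.card_indepSet_le_five hB
    rw [card_empty] at hA₀
    omega

theorem indepNum_add_five_le {V : Type*} [Finite V] {G : SimpleGraph V} {u v x y : V}
    {G' : SimpleGraph (V ⊕ Fin 12)} (huv : G.Adj u v) (hxy : G.Adj x y)
    (hleft : G'.comap inl ≤ G) (hright : G'.comap inr = misGadget)
    (hcross : ∀ a i, G'.Adj (inl a) (inr i) →
      (a = u ∧ i = 1) ∨ (a = v ∧ i = 0) ∨ (a = x ∧ i = 10) ∨ (a = y ∧ i = 8)) :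
    G.indepNum + 5 ≤ G'.indepNum := by
  classical
  obtain ⟨S, hS, hcard⟩ := G.exists_isNIndepSet_indepNum
  have hvu : u ∈ S → v ∉ S := fun hu hv => hS hu hv huv.ne huv
  have hyx : x ∈ S → y ∉ S := fun hx hy => hS hx hy hxy.ne hxy
  obtain ⟨T, ⟨hT, hT5⟩, hpT, hqT⟩ := misGadget.exists_isNIndepSet_five_notMem
    (p := if u ∈ S then 1 else 0) (q := if x ∈ S then 10 else 8) (by grind) (by grind)
  have hST : G'.IsIndepSet ↑(S.disjSum T) :=
    isIndepSet_disjSum.2 ⟨fun a ha b hb hne hadj => hS ha hb hne (hleft hadj), hright ▸ hT,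
      fun a ha i hi hadj => by grind⟩
  calc G.indepNum + 5 = #(S.disjSum T) := by rw [card_disjSum, hcard, hT5]
    _ ≤ G'.indepNum := hST.card_le_indepNum

theorem indepNum_mis_gadget_general {V : Type*} [Fintype V]
    (G : SimpleGraph V)
    (u v x y : V) (huv : G.Adj u v) (hxy : G.Adj x y)
    (G' : SimpleGraph (V ⊕ Fin 12))
    (hGG : ∀ s t : V, G'.Adj (inl s) (inl t) ↔
      G.Adj s t ∧ s(s, t) ≠ s(u, v) ∧ s(s, t) ≠ s(x, y))
    (hcross : ∀ s : V, ∀ i : Fin 12, G'.Adj (inl s) (inr i) ↔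
      ((s = u ∧ i = 1) ∨ (s = v ∧ i = 0) ∨ (s = x ∧ i = 10) ∨ (s = y ∧ i = 8)))
    (hgad : ∀ i j : Fin 12, G'.Adj (inr i) (inr j) ↔ misGadgetAdj i j ∨ misGadgetAdj j i) :
    G'.indepNum' = G.indepNum' + 5 := by
  have hleft : G'.comap inl = G.deleteEdges {s(u, v), s(x, y)} := by ext; simp [hGG]
  have hright : G'.comap inr = misGadget := by
    ext i j
    simp only [comap_adj, hgad, misGadget, fromRel_adj, iff_and_self]
    rintro h rfl
    revert i; decide
  rw [indepNum'_eq_indepNum, indepNum'_eq_indepNum]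
  refine le_antisymm ?_ ?_
  · obtain ⟨S, hS, hcard⟩ := G'.exists_isNIndepSet_indepNum
    rw [← toLeft_disjSum_toRight (u := S), isIndepSet_disjSum, hleft, hright] at hS
    rw [← hcard, ← card_toLeft_add_card_toRight]
    exact card_add_card_le_indepNum_add_five G hS.1 hS.2.1 (by simpa [hcross] using hS.2.2)
  · exact indepNum_add_five_le huv hxy (hleft ▸ deleteEdges_le _) hright
      fun a i => (hcross a i).1

/-- Lemma 3: replacing the two edges `(u,v)` and `(x,y)` of a 2-connected cubic
(planar) graph `G` by the 12-vertex gadget of Fig. 3(a) — where moreover `u` is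
attached to `v'`, `v` to `u'`, `x` to `y'` and `y` to `x'` — increases the
independence number by exactly 5: `α(G') = α(G) + 5`. -/
theorem indepNum_mis_gadget {V : Type*} [Fintype V] [DecidableEq V]
    (G : SimpleGraph V) [DecidableRel G.Adj]
    (h2conn : G.TwoConnected) (hcubic : ∀ a : V, G.degree a = 3)
    (u v x y : V) (huv : G.Adj u v) (hxy : G.Adj x y)
    (hne : s(u, v) ≠ s(x, y))
    (G' : SimpleGraph (V ⊕ Fin 12))
    (hGG : ∀ s t : V, G'.Adj (inl s) (inl t) ↔
      G.Adj s t ∧ s(s, t) ≠ s(u, v) ∧ s(s, t) ≠ s(x, y))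
    (hcross : ∀ s : V, ∀ i : Fin 12, G'.Adj (inl s) (inr i) ↔
      ((s = u ∧ i = 1) ∨ (s = v ∧ i = 0) ∨ (s = x ∧ i = 10) ∨ (s = y ∧ i = 8)))
    (hgad : ∀ i j : Fin 12, G'.Adj (inr i) (inr j) ↔ misGadgetAdj i j ∨ misGadgetAdj j i) :
    G'.indepNum' = G.indepNum' + 5 :=
  indepNum_mis_gadget_general G u v x y huv hxy G' hGG hcross hgad
end

section
/- If G is a 3-connected graph and G' is a graph whose suppression of all degree-2 vertices (i.e., smoothing the subdivision vertices) yields G, and G' has at most two degree-2 vertices that are non-adjacent, then G' is 2-connected. -/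
/-- `G` is 3-connected: at least 4 vertices, connected, and removing any two vertices
leaves it connected. -/
def SimpleGraph.ThreeConnected {V : Type*} [Fintype V] (G : SimpleGraph V) : Prop :=
  4 ≤ Fintype.card V ∧ G.Connected ∧
    ∀ a b : V, (((⊤ : G.Subgraph).deleteVerts {a, b}).coe.Connected)

/-- The graph obtained from `G'` by suppressing (smoothing) all its degree-2 vertices:
its vertices are the vertices of `G'` of degree `≠ 2`, and two of them are adjacent if
they are joined in `G'` by a nontrivial path all of whose internal vertices have
degree 2. -/
def SimpleGraph.smooth {W : Type*} [Fintype W] (G' : SimpleGraph W)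
    [DecidableRel G'.Adj] : SimpleGraph {w : W // G'.degree w ≠ 2} :=
  SimpleGraph.fromRel fun a b =>
    ∃ p : G'.Walk a.1 b.1, p.IsPath ∧ 0 < p.length ∧
      ∀ w ∈ p.support, w ≠ a.1 → w ≠ b.1 → G'.degree w = 2

/-!
Since no two degree-2 vertices of `G'` are adjacent, each edge of `G'.smooth` is an edge of `G'`
or a path `x m y` through a single degree-2 vertex `m`. To see that `G' - a` is connected: if
`a` has degree `≠ 2`, paths of `G'.smooth - a` lift to `G' - a`. If `a` has degree 2, with
neighbours `u` and `v`, the only edge of `G'.smooth` through `a` is `uv`; paths of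
`G'.smooth - u` lift, and `u` is reattached through a third neighbour, which it has because
`G'.smooth` is 3-connected. Finally, every degree-2 vertex other than `a` has a neighbour of
degree `≠ 2` other than `a`.
-/

namespace SimpleGraph

variable {V W : Type*}

theorem Reachable.lift {G : SimpleGraph V} {H : SimpleGraph W} (f : V → W)
    (hf : ∀ x y, G.Adj x y → H.Reachable (f x) (f y)) {u v : V} (h : G.Reachable u v) :
    H.Reachable (f u) (f v) := by
  rw [reachable_iff_reflTransGen] at h ⊢
  exact h.lift' f fun x y hxy => (reachable_iff_reflTransGen _ _).1 (hf x y hxy)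

/-- For every vertex `a`, the vertices other than `a` are joined in `G - a`, modelled as
`G.deleteIncidenceSet a`, in which `a` survives as an isolated vertex. -/
def NoCutVertex (G : SimpleGraph V) : Prop :=
  ∀ a x y, x ≠ a → y ≠ a → (G.deleteIncidenceSet a).Reachable x y

theorem connected_deleteVerts_singleton_iff {G : SimpleGraph V} {a : V} :
    ((⊤ : G.Subgraph).deleteVerts {a}).coe.Connected ↔
      (∃ x, x ≠ a) ∧ ∀ x y, x ≠ a → y ≠ a → (G.deleteIncidenceSet a).Reachable x y := by
  rw [connected_iff]
  constructor
  · rintro ⟨hpre, ⟨x⟩⟩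
    refine ⟨⟨x, by simpa using x.2⟩, fun x y hx hy => ?_⟩
    refine (hpre ⟨x, by simpa⟩ ⟨y, by simpa⟩).lift Subtype.val fun u w huw => ?_
    simp only [Subgraph.coe_adj, Subgraph.deleteVerts_adj] at huw
    exact (deleteIncidenceSet_adj.2
      ⟨huw.2.2.2.2, by simpa using u.2, by simpa using w.2⟩).reachable
  · classical
    rintro ⟨⟨x₀, hx₀⟩, h⟩
    refine ⟨fun x y => ?_, ⟨⟨x₀, by simpa⟩⟩⟩
    have hx : x.1 ≠ a := by simpa using x.2
    have hy : y.1 ≠ a := by simpa using y.2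
    -- `a` may be sent anywhere, since no edge of `G.deleteIncidenceSet a` meets it
    let f : V → ((⊤ : G.Subgraph).deleteVerts {a}).verts := fun z =>
      if hz : z = a then x else ⟨z, by simpa⟩
    have : ((⊤ : G.Subgraph).deleteVerts {a}).coe.Reachable (f x) (f y) := by
      refine (h x y hx hy).lift f fun u w huw => Adj.reachable ?_
      obtain ⟨huw, hu, hw⟩ := deleteIncidenceSet_adj.1 huw
      simp [f, huw, hu, hw]
    simpa only [f, hx, hy, dite_false] using this

theorem ThreeConnected.noCutVertex [Fintype V] {G : SimpleGraph V} (h : G.ThreeConnected) :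
    G.NoCutVertex := fun a =>
  (connected_deleteVerts_singleton_iff.1 (Set.pair_eq_singleton a ▸ h.2.2 a a)).2

theorem NoCutVertex.of_iso {G : SimpleGraph V} {H : SimpleGraph W} (e : G ≃g H)
    (h : G.NoCutVertex) : H.NoCutVertex := by
  intro a x y hx hy
  have : (H.deleteIncidenceSet a).Reachable (e (e.symm x)) (e (e.symm y)) :=
    (h (e.symm a) (e.symm x) (e.symm y) (by simpa) (by simpa)).lift e fun u w huw => by
      obtain ⟨huw, hu, hw⟩ := deleteIncidenceSet_adj.1 huw
      refine (deleteIncidenceSet_adj.2 ⟨e.map_adj_iff.2 huw, ?_, ?_⟩).reachable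
      · exact fun h => hu (h ▸ (e.symm_apply_apply u).symm)
      · exact fun h => hw (h ▸ (e.symm_apply_apply w).symm)
  simpa using this

theorem NoCutVertex.exists_adj_ne [Fintype V] {G : SimpleGraph V} (h : G.NoCutVertex)
    (hcard : 3 ≤ Fintype.card V) {u v : V} (huv : u ≠ v) : ∃ t, G.Adj u t ∧ t ≠ v := by
  obtain ⟨z, hzu, hzv⟩ := ENat.exists_ne_ne_of_three_le (by simpa using hcard) u v
  have huz := h v u z huv hzv
  rw [reachable_iff_reflTransGen, Relation.ReflTransGen.cases_head_iff] at huz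
  obtain huz | ⟨t, hut, -⟩ := huz
  · exact absurd huz.symm hzu
  · exact ⟨t, (deleteIncidenceSet_adj.1 hut).1, (deleteIncidenceSet_adj.1 hut).2.2⟩

theorem NoCutVertex.twoConnected [Fintype V] {G : SimpleGraph V} (h : G.NoCutVertex)
    (hcard : 3 ≤ Fintype.card V) : G.TwoConnected := by
  have hthird := ENat.exists_ne_ne_of_three_le (α := V) (by simpa using hcard)
  refine ⟨hcard, (connected_iff _).2 ⟨fun x y => ?_, ?_⟩, fun a => ?_⟩
  · obtain ⟨z, hzx, hzy⟩ := hthird x y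
    exact (h z x y hzx.symm hzy.symm).mono (deleteIncidenceSet_le G z)
  · exact Fintype.card_pos_iff.1 (by omega)
  · obtain ⟨z, hz, -⟩ := hthird a a
    exact connected_deleteVerts_singleton_iff.2 ⟨⟨z, hz⟩, h a⟩

section Smooth

variable [Fintype V] {G : SimpleGraph V} [DecidableRel G.Adj]

theorem exists_adj_of_degree_eq_two [DecidableEq V] {w : V} (hw : G.degree w = 2) :
    ∃ u v, u ≠ v ∧ G.Adj w u ∧ G.Adj w v ∧ ∀ z, G.Adj w z → z = u ∨ z = v := by
  obtain ⟨u, v, huv, hnb⟩ := Finset.card_eq_two.1 hw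
  have hmem : ∀ z, G.Adj w z ↔ z = u ∨ z = v := fun z => by
    rw [← mem_neighborFinset, hnb, Finset.mem_insert, Finset.mem_singleton]
  exact ⟨u, v, huv, (hmem u).2 (Or.inl rfl), (hmem v).2 (Or.inr rfl), fun z => (hmem z).1⟩

theorem degree_ne_two_of_adj (hind : G.IsIndepSet {w | G.degree w = 2}) {w z : V}
    (hw : G.degree w = 2) (h : G.Adj w z) : G.degree z ≠ 2 :=
  fun hz => hind hw hz h.ne h

theorem Walk.adj_or_exists_degree_two_of_isPath (hind : G.IsIndepSet {w | G.degree w = 2})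
    {u v : V} (p : G.Walk u v) (hp : p.IsPath) (hlen : 0 < p.length)
    (hinner : ∀ w ∈ p.support, w ≠ u → w ≠ v → G.degree w = 2) :
    G.Adj u v ∨ ∃ m, G.degree m = 2 ∧ G.Adj u m ∧ G.Adj m v := by
  cases p with
  | nil => simp at hlen
  | @cons _ c _ huc q =>
    by_cases hcv : c = v
    · exact Or.inl (hcv ▸ huc)
    have hc : G.degree c = 2 := hinner c (by simp) huc.ne.symm hcv
    cases q with
    | nil => exact absurd rfl hcv
    | @cons _ d _ hcd _ =>
      by_cases hdv : d = v
      · exact Or.inr ⟨c, hc, huc, hdv ▸ hcd⟩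
      have hud : u ≠ d := by
        rintro rfl
        simp [Walk.cons_isPath_iff] at hp
      exact absurd hcd (hind hc (hinner d (by simp) hud.symm hdv) hcd.ne)

theorem adj_or_exists_degree_two_of_smooth_adj (hind : G.IsIndepSet {w | G.degree w = 2})
    {x y : {w // G.degree w ≠ 2}} (h : G.smooth.Adj x y) :
    G.Adj x y ∨ ∃ m, G.degree m = 2 ∧ G.Adj x m ∧ G.Adj m y := by
  obtain ⟨-, ⟨p, hp, hlen, hinner⟩ | ⟨p, hp, hlen, hinner⟩⟩ := (fromRel_adj _ _ _).1 h
  · exact Walk.adj_or_exists_degree_two_of_isPath hind p hp hlen hinner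
  · refine Walk.adj_or_exists_degree_two_of_isPath hind p.reverse hp.reverse (by simpa using hlen)
      fun w hw hwx hwy => hinner w (by simpa using hw) hwy hwx

theorem reachable_deleteIncidenceSet_of_smooth_adj (hind : G.IsIndepSet {w | G.degree w = 2})
    {a : V} {x y : {w // G.degree w ≠ 2}} (h : G.smooth.Adj x y) (hx : x.1 ≠ a) (hy : y.1 ≠ a)
    (ha : G.degree a = 2 → G.Adj x a → ¬ G.Adj a y) :
    (G.deleteIncidenceSet a).Reachable x y := by
  rcases adj_or_exists_degree_two_of_smooth_adj hind h with hxy | ⟨m, hm, hxm, hmy⟩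
  · exact (deleteIncidenceSet_adj.2 ⟨hxy, hx, hy⟩).reachable
  · have hma : m ≠ a := by
      rintro rfl
      exact ha hm hxm hmy
    exact (deleteIncidenceSet_adj.2 ⟨hxm, hx, hma⟩).reachable.trans
      (deleteIncidenceSet_adj.2 ⟨hmy, hma, hy⟩).reachable

theorem reachable_deleteIncidenceSet_of_degree_ne_two (hind : G.IsIndepSet {w | G.degree w = 2})
    (hS : G.smooth.NoCutVertex) {a : V} (ha : G.degree a ≠ 2) {x y : {w // G.degree w ≠ 2}}
    (hx : x.1 ≠ a) (hy : y.1 ≠ a) : (G.deleteIncidenceSet a).Reachable x y := by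
  refine (hS ⟨a, ha⟩ x y (fun h => hx (congrArg Subtype.val h))
    (fun h => hy (congrArg Subtype.val h))).lift Subtype.val fun u w huw => ?_
  obtain ⟨huw, hu, hw⟩ := deleteIncidenceSet_adj.1 huw
  exact reachable_deleteIncidenceSet_of_smooth_adj hind huw (fun h => hu (Subtype.ext h))
    (fun h => hw (Subtype.ext h)) fun h => absurd h ha

theorem reachable_deleteIncidenceSet_of_degree_eq_two (hind : G.IsIndepSet {w | G.degree w = 2})
    (hS : G.smooth.NoCutVertex) (hcard : 3 ≤ Fintype.card {w // G.degree w ≠ 2}) {a : V}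
    (ha : G.degree a = 2) {u v : {w // G.degree w ≠ 2}} (huv : u ≠ v)
    (hnb : ∀ z, G.Adj a z → z = u ∨ z = v) (x : {w // G.degree w ≠ 2}) :
    (G.deleteIncidenceSet a).Reachable x v := by
  have hne : ∀ z : {w // G.degree w ≠ 2}, z.1 ≠ a := fun z h => z.2 (h ▸ ha)
  have hoff : ∀ z, z ≠ u → (G.deleteIncidenceSet a).Reachable z v := fun z hzu =>
    (hS u z v hzu huv.symm).lift Subtype.val fun s t hst => by
      obtain ⟨hst, hs, ht⟩ := deleteIncidenceSet_adj.1 hst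
      refine reachable_deleteIncidenceSet_of_smooth_adj hind hst (hne s) (hne t) fun _ hsa hat => ?_
      obtain hs' | hs' := hnb s hsa.symm
      · exact hs (Subtype.ext hs')
      obtain ht' | ht' := hnb t hat
      · exact ht (Subtype.ext ht')
      · exact hst.ne (Subtype.ext (hs'.trans ht'.symm))
  by_cases hxu : x = u
  · subst hxu
    obtain ⟨t, hxt, htv⟩ := hS.exists_adj_ne hcard huv
    refine Reachable.trans ?_ (hoff t hxt.ne.symm)
    refine reachable_deleteIncidenceSet_of_smooth_adj hind hxt (hne x) (hne t) fun _ _ hat => ?_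
    obtain ht | ht := hnb t hat
    · exact hxt.ne (Subtype.ext ht.symm)
    · exact htv (Subtype.ext ht)
  · exact hoff x hxu

theorem exists_reachable_deleteIncidenceSet_degree_ne_two
    (hind : G.IsIndepSet {w | G.degree w = 2}) {a w : V} (hw : w ≠ a) :
    ∃ x : {w // G.degree w ≠ 2}, x.1 ≠ a ∧ (G.deleteIncidenceSet a).Reachable w x := by
  classical
  by_cases hw2 : G.degree w = 2
  · obtain ⟨u, v, huv, hwu, hwv, -⟩ := exists_adj_of_degree_eq_two hw2
    by_cases hua : u = a
    · have hva : v ≠ a := fun h => huv (hua.trans h.symm)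
      exact ⟨⟨v, degree_ne_two_of_adj hind hw2 hwv⟩, hva,
        (deleteIncidenceSet_adj.2 ⟨hwv, hw, hva⟩).reachable⟩
    · exact ⟨⟨u, degree_ne_two_of_adj hind hw2 hwu⟩, hua,
        (deleteIncidenceSet_adj.2 ⟨hwu, hw, hua⟩).reachable⟩
  · exact ⟨⟨w, hw2⟩, hw, Reachable.rfl⟩

theorem NoCutVertex.of_smooth (hind : G.IsIndepSet {w | G.degree w = 2})
    (hcard : 3 ≤ Fintype.card {w // G.degree w ≠ 2}) (hS : G.smooth.NoCutVertex) :
    G.NoCutVertex := by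
  classical
  intro a x y hx hy
  have hsmooth : ∀ x y : {w // G.degree w ≠ 2}, x.1 ≠ a → y.1 ≠ a →
      (G.deleteIncidenceSet a).Reachable x y := by
    by_cases ha : G.degree a = 2
    · obtain ⟨u, v, huv, hau, hav, hnb⟩ := exists_adj_of_degree_eq_two ha
      have hv := reachable_deleteIncidenceSet_of_degree_eq_two hind hS hcard ha
        (u := ⟨u, degree_ne_two_of_adj hind ha hau⟩) (v := ⟨v, degree_ne_two_of_adj hind ha hav⟩)
        (fun h => huv (congrArg Subtype.val h)) hnb
      exact fun x y _ _ => (hv x).trans (hv y).symm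
    · exact fun x y => reachable_deleteIncidenceSet_of_degree_ne_two hind hS ha
  obtain ⟨x', hx', hxx'⟩ := exists_reachable_deleteIncidenceSet_degree_ne_two hind hx
  obtain ⟨y', hy', hyy'⟩ := exists_reachable_deleteIncidenceSet_degree_ne_two hind hy
  exact hxx'.trans ((hsmooth x' y' hx' hy').trans hyy'.symm)

end Smooth

end SimpleGraph

theorem twoConnected_of_subdivision_of_threeConnected_general
    {V W : Type*} [Fintype V] [Fintype W]
    (G : SimpleGraph V) (G' : SimpleGraph W) [DecidableRel G'.Adj]
    (h3 : G.ThreeConnected)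
    (hiso : Nonempty (G ≃g G'.smooth))
    (hnonadj : {w : W | G'.degree w = 2}.Pairwise fun a b => ¬ G'.Adj a b) :
    G'.TwoConnected := by
  obtain ⟨e⟩ := hiso
  have hcardS : 4 ≤ Fintype.card {w // G'.degree w ≠ 2} :=
    h3.1.trans (Fintype.card_congr e.toEquiv).le
  have hcardW := Fintype.card_subtype_le fun w => G'.degree w ≠ 2
  have hS : G'.smooth.NoCutVertex := h3.noCutVertex.of_iso e
  exact (SimpleGraph.NoCutVertex.of_smooth hnonadj (by omega) hS).twoConnected (by omega)

/-- If suppressing all degree-2 vertices of `G'` yields a 3-connected graph `G`, and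
`G'` has at most two degree-2 vertices which are moreover pairwise non-adjacent,
then `G'` is 2-connected. -/
theorem twoConnected_of_subdivision_of_threeConnected
    {V W : Type*} [Fintype V] [Fintype W]
    (G : SimpleGraph V) (G' : SimpleGraph W) [DecidableRel G'.Adj]
    (h3 : G.ThreeConnected)
    (hiso : Nonempty (G ≃g G'.smooth))
    (hcard : {w : W | G'.degree w = 2}.ncard ≤ 2)
    (hnonadj : {w : W | G'.degree w = 2}.Pairwise fun a b => ¬ G'.Adj a b) :
    G'.TwoConnected :=
  twoConnected_of_subdivision_of_threeConnected_general G G' h3 hiso hnonadj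
end

section
/- Let G be a 2-connected plane graph and let Φ_k (k ≥ 4) be the internally triangulated gadget consisting of a k-cycle C_k = c_1, ..., c_k, a K4 on vertices {a,b,c,d}, edges (d, c_i) for all i, and edges (c_1,b), (c_1,c), (c_2,c) (and (c_1,d) already present), embedded with C_k as its outer face. If G' is obtained from G by identifying a face f of size k of G with the outer cycle of Φ_k, then G' is 2-connected and α(G') = α(G) + 1. -/
/-!
The `K₄` on `a, b, c, d` meets every independent set of `G'` in at most one vertex, while `a`,
having no neighbour in `G`, extends every independent set of `G`; hence `α(G') = α(G) + 1`.
Both `G` and `K₄` stay connected after deleting any one vertex, and the edges `c₁b` and `c₂d`,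
disjoint at both ends, still join them after any single deletion; so `G'` is 2-connected.
-/

open Sum

/-- The independence number `α G`. -/
noncomputable def SimpleGraph.indepNumOld {V : Type*} (G : SimpleGraph V) : ℕ :=
  sSup {n | ∃ s : Finset V, G.IsIndepVertexSet ↑s ∧ s.card = n}

namespace SimpleGraph

variable {U V W X : Type*}

abbrev deleteVert (G : SimpleGraph V) (a : V) :
    SimpleGraph ((⊤ : G.Subgraph).deleteVerts {a}).verts :=
  ((⊤ : G.Subgraph).deleteVerts {a}).coe

def DeletionConnected (G : SimpleGraph V) : Prop :=
  ∀ a, (G.deleteVert a).Connected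

@[simp]
lemma deleteVert_adj {G : SimpleGraph V} {a : V}
    {x y : ((⊤ : G.Subgraph).deleteVerts {a}).verts} :
    (G.deleteVert a).Adj x y ↔ G.Adj x y := by
  obtain ⟨x, hx⟩ := x
  obtain ⟨y, hy⟩ := y
  simp only [Subgraph.deleteVerts_verts, Subgraph.verts_top, Set.mem_sdiff, Set.mem_univ,
    true_and, Set.mem_singleton_iff] at hx hy
  simp [hx, hy]

def Hom.toDeleteVert {H : SimpleGraph U} {G : SimpleGraph V} (φ : H →g G) (a : V)
    (ha : ∀ z, φ z ≠ a) : H →g G.deleteVert a where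
  toFun z := ⟨φ z, by simp [ha z]⟩
  map_rel' h := deleteVert_adj.2 (φ.map_adj h)

lemma connected_of_homs_of_adj {G : SimpleGraph U} {H : SimpleGraph W} {K : SimpleGraph X}
    (α : G →g K) (β : H →g K) (hG : G.Connected) (hH : H.Connected)
    (hcover : ∀ x, x ∈ Set.range α ∨ x ∈ Set.range β) {u : U} {w : W}
    (h : K.Adj (α u) (β w)) :
    K.Connected := by
  refine (connected_iff_exists_forall_reachable K).2 ⟨α u, fun x => ?_⟩
  rcases hcover x with ⟨u', rfl⟩ | ⟨w', rfl⟩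
  · exact (hG u u').map α
  · exact h.reachable.trans ((hH w w').map β)

lemma deletionConnected_top [Nontrivial W] : (⊤ : SimpleGraph W).DeletionConnected := by
  intro a
  obtain ⟨b, hb⟩ := exists_ne a
  refine (connected_iff_exists_forall_reachable _).2 ⟨⟨b, by simpa⟩, fun ⟨c, hc⟩ => ?_⟩
  by_cases hbc : b = c
  · subst hbc; rfl
  · exact (deleteVert_adj.2 ((top_adj b c).2 hbc)).reachable

section Sum

variable {G : SimpleGraph V} {H : SimpleGraph W} {G' : SimpleGraph (V ⊕ W)}

lemma connected_of_sum_le (hG : G.Connected) (hH : H.Connected) (hle : G ⊕g H ≤ G')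
    {u : V} {w : W} (h : G'.Adj (inl u) (inr w)) : G'.Connected :=
  (hG.sum_sup_edge hH).mono (sup_le hle (by simpa [edge_le_iff] using h))

lemma deletionConnected_of_sum_le (hG : G.Connected) (hH : H.Connected)
    (hGd : G.DeletionConnected) (hHd : H.DeletionConnected) (hle : G ⊕g H ≤ G')
    {u₁ u₂ : V} {w₁ w₂ : W} (hu : u₁ ≠ u₂) (hw : w₁ ≠ w₂)
    (h₁ : G'.Adj (inl u₁) (inr w₁)) (h₂ : G'.Adj (inl u₂) (inr w₂)) :
    G'.DeletionConnected := by
  let φ : G →g G' := (Hom.ofLE hle).comp Embedding.sumInl.toHom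
  let ψ : H →g G' := (Hom.ofLE hle).comp Embedding.sumInr.toHom
  rintro (v | j)
  · obtain ⟨u, w, huv, h⟩ : ∃ u w, u ≠ v ∧ G'.Adj (inl u) (inr w) := by
      by_cases h : u₁ = v
      exacts [⟨u₂, w₂, fun h' => hu (h.trans h'.symm), h₂⟩, ⟨u₁, w₁, h, h₁⟩]
    refine connected_of_homs_of_adj
      ((φ.comp (Subgraph.hom _)).toDeleteVert (inl v) ?_) (ψ.toDeleteVert (inl v) (by simp [ψ]))
      (hGd v) hH ?_ (u := ⟨u, by simpa⟩) (w := w) (deleteVert_adj.2 h)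
    · rintro ⟨s, hs⟩
      simpa [φ] using hs
    · rintro ⟨s | i, hx⟩
      · exact Or.inl ⟨⟨s, by simpa using hx⟩, rfl⟩
      · exact Or.inr ⟨i, rfl⟩
  · obtain ⟨u, w, hwj, h⟩ : ∃ u w, w ≠ j ∧ G'.Adj (inl u) (inr w) := by
      by_cases h : w₁ = j
      exacts [⟨u₂, w₂, fun h' => hw (h.trans h'.symm), h₂⟩, ⟨u₁, w₁, h, h₁⟩]
    refine connected_of_homs_of_adj
      (φ.toDeleteVert (inr j) (by simp [φ])) ((ψ.comp (Subgraph.hom _)).toDeleteVert (inr j) ?_)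
      hG (hHd j) ?_ (u := u) (w := ⟨w, by simpa⟩) (deleteVert_adj.2 h)
    · rintro ⟨i, hi⟩
      simpa [ψ] using hi
    · rintro ⟨s | i, hx⟩
      · exact Or.inl ⟨s, rfl⟩
      · exact Or.inr ⟨⟨i, by simpa using hx⟩, rfl⟩

variable [Finite V] [Finite W]

lemma indepNum_le_of_sum_le (hle : G ⊕g H ≤ G') : G'.indepNum ≤ G.indepNum + H.indepNum := by
  obtain ⟨s, hs⟩ := G'.exists_isNIndepSet_indepNum
  have hl : G.IsIndepSet (s.toLeft : Set V) := fun a ha b hb hab hadj =>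
    hs.isIndepSet (Finset.mem_toLeft.1 ha) (Finset.mem_toLeft.1 hb) (inl_injective.ne hab)
      (hle (sum_adj_inl.2 hadj))
  have hr : H.IsIndepSet (s.toRight : Set W) := fun i hi j hj hij hadj =>
    hs.isIndepSet (Finset.mem_toRight.1 hi) (Finset.mem_toRight.1 hj) (inr_injective.ne hij)
      (hle (sum_adj_inr.2 hadj))
  rw [← hs.card_eq, ← s.card_toLeft_add_card_toRight]
  exact add_le_add hl.card_le_indepNum hr.card_le_indepNum

lemma indepNum_add_one_le (hG : ∀ s t, G'.Adj (inl s) (inl t) → G.Adj s t) (w : W)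
    (hw : ∀ s, ¬G'.Adj (inl s) (inr w)) : G.indepNum + 1 ≤ G'.indepNum := by
  obtain ⟨s, hs⟩ := G.exists_isNIndepSet_indepNum
  have hind : G'.IsIndepSet (s.disjSum {w} : Set (V ⊕ W)) := by
    rintro (a | i) ha (b | j) hb hne hadj <;> simp only [Finset.mem_coe, Finset.inl_mem_disjSum,
      Finset.inr_mem_disjSum, Finset.mem_singleton] at ha hb
    · exact hs.isIndepSet ha hb (fun h => hne (congrArg inl h)) (hG a b hadj)
    · exact hw a (hb ▸ hadj)
    · exact hw b (ha ▸ hadj.symm)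
    · exact hne (by rw [ha, hb])
  simpa [Finset.card_disjSum, hs.card_eq] using hind.card_le_indepNum

end Sum

lemma indepNum_top_le_one : (⊤ : SimpleGraph W).indepNum ≤ 1 := by
  obtain ⟨s, hs⟩ := (⊤ : SimpleGraph W).exists_isNIndepSet_indepNum
  rw [← hs.card_eq, Finset.card_le_one]
  intro a ha b hb
  by_contra hab
  exact hs.isIndepSet ha hb hab ((top_adj a b).2 hab)

lemma indepNumOld_eq_indepNum (G : SimpleGraph V) : G.indepNumOld = G.indepNum := by
  simp only [indepNumOld, indepNum, isNIndepSet_iff]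
  rfl

end SimpleGraph

/-- The gadget vertices `a, b, c, d` are `inr 0, …, inr 3`, and the face cycle
`c₁, …, c_k` is `f 0, …, f (k - 1)`. -/
theorem phi_gadget_glue_general {V : Type*} [Fintype V]
    (G : SimpleGraph V) (h2conn : G.TwoConnected)
    (k : ℕ) [NeZero k] (hk : 4 ≤ k)
    (f : Fin k → V) (hinj : Function.Injective f)
    (G' : SimpleGraph (V ⊕ Fin 4))
    (hGG : ∀ s t : V, G'.Adj (inl s) (inl t) ↔ G.Adj s t)
    (hA : ∀ s : V, ¬ G'.Adj (inl s) (inr 0))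
    (hB : ∀ s : V, G'.Adj (inl s) (inr 1) ↔ s = f 0)
    (hD : ∀ s : V, G'.Adj (inl s) (inr 3) ↔ ∃ i : Fin k, s = f i)
    (hK4 : ∀ i j : Fin 4, G'.Adj (inr i) (inr j) ↔ i ≠ j) :
    G'.TwoConnected ∧ G'.indepNumOld = G.indepNumOld + 1 := by
  obtain ⟨-, hGc, hGd⟩ := h2conn
  have hle : G ⊕g (⊤ : SimpleGraph (Fin 4)) ≤ G' := by
    rintro (s | i) (t | j) h <;> simp at h
    exacts [(hGG s t).2 h, (hK4 i j).2 h]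
  have hf : f 0 ≠ f 1 := hinj.ne (by simp [Fin.ext_iff]; omega)
  have hb : G'.Adj (inl (f 0)) (inr 1) := (hB _).2 rfl
  have hd : G'.Adj (inl (f 1)) (inr 3) := (hD _).2 ⟨1, rfl⟩
  refine ⟨⟨by simp, SimpleGraph.connected_of_sum_le hGc SimpleGraph.connected_top hle hb,
    SimpleGraph.deletionConnected_of_sum_le hGc SimpleGraph.connected_top hGd
      SimpleGraph.deletionConnected_top hle hf (by decide) hb hd⟩, ?_⟩
  rw [G.indepNumOld_eq_indepNum, G'.indepNumOld_eq_indepNum]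
  refine le_antisymm ?_ (SimpleGraph.indepNum_add_one_le (fun s t => (hGG s t).1) 0 hA)
  calc G'.indepNum ≤ G.indepNum + (⊤ : SimpleGraph (Fin 4)).indepNum :=
        SimpleGraph.indepNum_le_of_sum_le hle
    _ ≤ G.indepNum + 1 := by grw [SimpleGraph.indepNum_top_le_one]

/-- Gluing the internally triangulated gadget `Φ_k` (`k ≥ 4`) into a face of a
2-connected plane graph `G` bounded by the cycle `c₁, …, c_k` (given by the injective
map `f`): the gadget adds a `K₄` on new vertices `a = inr 0, b = inr 1, c = inr 2,
d = inr 3`, the edges `(d, cᵢ)` for all `i`, and the edges `(c₁, b), (c₁, c), (c₂, c)`;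
the vertex `a` has no neighbor among the original vertices. The resulting graph `G'`
is 2-connected and satisfies `α(G') = α(G) + 1`. -/
theorem phi_gadget_glue {V : Type*} [Fintype V] [DecidableEq V]
    (G : SimpleGraph V) (h2conn : G.TwoConnected)
    (k : ℕ) [NeZero k] (hk : 4 ≤ k)
    (f : Fin k → V) (hinj : Function.Injective f)
    (hcyc : ∀ i : Fin k, G.Adj (f i) (f (i + 1)))
    (G' : SimpleGraph (V ⊕ Fin 4))
    (hGG : ∀ s t : V, G'.Adj (inl s) (inl t) ↔ G.Adj s t)
    (hA : ∀ s : V, ¬ G'.Adj (inl s) (inr 0))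
    (hB : ∀ s : V, G'.Adj (inl s) (inr 1) ↔ s = f 0)
    (hC : ∀ s : V, G'.Adj (inl s) (inr 2) ↔ s = f 0 ∨ s = f 1)
    (hD : ∀ s : V, G'.Adj (inl s) (inr 3) ↔ ∃ i : Fin k, s = f i)
    (hK4 : ∀ i j : Fin 4, G'.Adj (inr i) (inr j) ↔ i ≠ j) :
    G'.TwoConnected ∧ G'.indepNumOld = G.indepNumOld + 1 :=
  phi_gadget_glue_general G h2conn k hk f hinj G' hGG hA hB hD hK4
end
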